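/- Let d ≥ 3, r_h > 0, f₀ᵈ > 0, and let χ, m : [r_h, ∞) → ℝ be continuous with χ ≥ 0, 0 ≤ m(x) ≤ f₀ᵈ/2, and 1 = 2d ∫_{r_h}^∞ m(x) e^{-χ(x)/2} x^{-(d+1)} dx. If moreover f₀ᵈ = r_hᵈ (the Penrose inequality is saturated), then m(x) = f₀ᵈ/2 and χ(x) = 0 for all x ≥ r_h. -/

import Mathlib

/-!
Since `m ≤ f₀ᵈ/2` and `e^{-χ/2} ≤ 1`, the integrand `m e^{-χ/2} x^{-(d+1)}` is bounded by
`(f₀ᵈ/2) x^{-(d+1)}`, whose integral over `(r_h, ∞)` is `f₀ᵈ / (2d r_hᵈ) = 1/(2d)` when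
`f₀ᵈ = r_hᵈ`. The normalization says the two integrals agree, so the continuous nonnegative gap
vanishes identically; pointwise this forces `e^{-χ/2} = 1` and `m = f₀ᵈ/2`.
-/

open MeasureTheory Set Real

lemma rpow_neg_natCast_succ {x : ℝ} (hx : 0 ≤ x) (n : ℕ) :
    x ^ (-((n : ℝ) + 1)) = (x ^ (n + 1))⁻¹ := by
  rw [rpow_neg hx, ← rpow_natCast]
  push_cast
  rfl

lemma neg_natCast_add_one_lt_neg_one {n : ℕ} (hn : n ≠ 0) : -((n : ℝ) + 1) < -1 := by
  have : (1 : ℝ) ≤ n := by exact_mod_cast Nat.one_le_iff_ne_zero.mpr hn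
  linarith

lemma integrableOn_Ioi_inv_pow_succ {n : ℕ} (hn : n ≠ 0) {r : ℝ} (hr : 0 < r) :
    IntegrableOn (fun x : ℝ ↦ (x ^ (n + 1))⁻¹) (Ioi r) := by
  refine (integrableOn_Ioi_rpow_of_lt (neg_natCast_add_one_lt_neg_one hn) hr).congr_fun
    (fun x hx ↦ ?_) measurableSet_Ioi
  exact rpow_neg_natCast_succ (hr.trans hx).le n

lemma integral_Ioi_inv_pow_succ {n : ℕ} (hn : n ≠ 0) {r : ℝ} (hr : 0 < r) :
    ∫ x in Ioi r, (x ^ (n + 1))⁻¹ = (n * r ^ n)⁻¹ := by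
  rw [← setIntegral_congr_fun measurableSet_Ioi
      (fun x hx ↦ rpow_neg_natCast_succ (hr.trans hx).le n),
    integral_Ioi_rpow_of_lt (neg_natCast_add_one_lt_neg_one hn) hr,
    show -((n : ℝ) + 1) + 1 = -n by ring, rpow_neg hr.le, rpow_natCast]
  have : (n : ℝ) ≠ 0 := by exact_mod_cast hn
  field_simp

lemma eqOn_Ici_of_le_of_setIntegral_Ioi_eq {f g : ℝ → ℝ} {a : ℝ}
    (hf : ContinuousOn f (Ici a)) (hg : ContinuousOn g (Ici a))
    (hfi : IntegrableOn f (Ioi a)) (hgi : IntegrableOn g (Ioi a))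
    (hle : ∀ x ∈ Ioi a, f x ≤ g x) (heq : ∫ x in Ioi a, f x = ∫ x in Ioi a, g x) :
    EqOn f g (Ici a) := by
  have hle_ae : f ≤ᵐ[volume.restrict (Ioi a)] g :=
    (ae_restrict_mem measurableSet_Ioi).mono hle
  have hae : f =ᵐ[volume.restrict (Ici a)] g := by
    rw [Measure.restrict_congr_set Ioi_ae_eq_Ici.symm]
    exact (integral_eq_iff_of_ae_le hfi hgi hle_ae).mp heq
  exact Measure.eqOn_of_ae_eq hae hf hg (by rw [interior_Ici, closure_Ioi])

lemma mul_exp_neg_half_le {m M χ : ℝ} (hm₀ : 0 ≤ m) (hm : m ≤ M) (hχ : 0 ≤ χ) :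
    m * exp (-χ / 2) ≤ M :=
  calc m * exp (-χ / 2) ≤ m * 1 := by gcongr; exact exp_le_one_iff.mpr (by linarith)
    _ = m := mul_one m
    _ ≤ M := hm

lemma eq_and_eq_zero_of_mul_exp_neg_half_eq {m M χ : ℝ} (hM : 0 < M) (hm : m ≤ M)
    (hχ : 0 ≤ χ) (h : m * exp (-χ / 2) = M) : m = M ∧ χ = 0 := by
  have he_le : exp (-χ / 2) ≤ 1 := exp_le_one_iff.mpr (by linarith)
  have he : exp (-χ / 2) = 1 := by
    by_contra hne
    have hm_pos : 0 < m := pos_of_mul_pos_left (h ▸ hM) (exp_pos _).le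
    nlinarith [lt_of_le_of_ne he_le hne]
  refine ⟨by simpa [he] using h, ?_⟩
  have : -χ / 2 = 0 := exp_eq_one_iff _ |>.mp he
  linarith

theorem stmt_15 (d : ℕ) (hd : 3 ≤ d) (r_h f0d : ℝ) (hrh : 0 < r_h) (hf0 : 0 < f0d)
    (χ m : ℝ → ℝ) (hχc : ContinuousOn χ (Set.Ici r_h)) (hmc : ContinuousOn m (Set.Ici r_h))
    (hχn : ∀ x, r_h ≤ x → 0 ≤ χ x)
    (hmb : ∀ x, r_h ≤ x → 0 ≤ m x ∧ m x ≤ f0d / 2)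
    (hnorm : 1 = 2 * d * ∫ x in Set.Ioi r_h, m x * Real.exp (-χ x / 2) / x ^ (d + 1))
    (hsat : f0d = r_h ^ d) :
    ∀ x, r_h ≤ x → m x = f0d / 2 ∧ χ x = 0 := by
  have hd0 : d ≠ 0 := by omega
  have hd0' : (d : ℝ) ≠ 0 := by exact_mod_cast hd0
  have hpow_ne : ∀ x ∈ Ici r_h, x ^ (d + 1) ≠ 0 := fun x hx ↦ pow_ne_zero _ (hrh.trans_le hx).ne'
  set F : ℝ → ℝ := fun x ↦ m x * exp (-χ x / 2) / x ^ (d + 1)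
  set G : ℝ → ℝ := fun x ↦ f0d / 2 * (x ^ (d + 1))⁻¹
  have hFG : EqOn F G (Ici r_h) := by
    refine eqOn_Ici_of_le_of_setIntegral_Ioi_eq ?_ ?_ ?_ ?_ ?_ ?_
    · exact (hmc.mul (continuous_exp.comp_continuousOn (hχc.neg.div_const 2))).div
        (continuous_pow _).continuousOn hpow_ne
    · exact continuousOn_const.mul ((continuous_pow _).continuousOn.inv₀ hpow_ne)
    -- a non-integrable integrand would have integral `0`, contradicting the normalization
    · exact Integrable.of_integral_ne_zero fun h ↦ by simp [h] at hnorm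
    · exact (integrableOn_Ioi_inv_pow_succ hd0 hrh).const_mul _
    · intro x hx
      have : 0 < x ^ (d + 1) := pow_pos (hrh.trans hx) _
      simp only [F, G, div_eq_mul_inv (m x * _)]
      gcongr
      exact mul_exp_neg_half_le (hmb x hx.le).1 (hmb x hx.le).2 (hχn x hx.le)
    · rw [integral_const_mul, integral_Ioi_inv_pow_succ hd0 hrh, ← hsat]
      field_simp
      linarith
  intro x hx
  have hFx : m x * exp (-χ x / 2) = f0d / 2 := by
    have := hFG hx
    simp only [F, G, div_eq_mul_inv (m x * _)] at this
    exact mul_right_cancel₀ (inv_ne_zero (hpow_ne x hx)) this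
  exact eq_and_eq_zero_of_mul_exp_neg_half_eq (half_pos hf0) (hmb x hx).2 (hχn x hx) hFx
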